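/- If B = √(B_x² + B_y²) > 1/2 and φ satisfies B_x = B sin φ, B_y = B cos φ, then on C_0^∞(ℝ³) the operator 2H = (e^z D_x + B_x)² + (e^{−z} D_y + B_y)² + D_z² decomposes as 2H = K_x† K_x + K_y† K_y + B − 1/4, where K_x = e^z D_x + sin φ (B − 1/2 − i D_z), K_x† = e^z D_x + sin φ (B − 1/2 + i D_z), K_y = e^{−z} D_y + cos φ (B − 1/2 + i D_z), K_y† = e^{−z} D_y + cos φ (B − 1/2 − i D_z); consequently ⟨H u, u⟩ ≥ (1/2)(B − 1/4) ‖u‖² for all u ∈ C_0^∞(ℝ³). -/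

import Mathlib

open MeasureTheory

/-- Functions of three real variables. -/
abbrev F3 : Type := ℝ → ℝ → ℝ → ℂ

/-- `D_x = −i ∂/∂x`. -/
noncomputable def DX (u : F3) : F3 := fun x y z => -Complex.I * deriv (fun t => u t y z) x
/-- `D_y = −i ∂/∂y`. -/
noncomputable def DY (u : F3) : F3 := fun x y z => -Complex.I * deriv (fun t => u x t z) y
/-- `D_z = −i ∂/∂z`. -/
noncomputable def DZ (u : F3) : F3 := fun x y z => -Complex.I * deriv (fun t => u x y t) z

/-- `e^z D_x + B_x`. -/
noncomputable def PX (Bx : ℝ) (u : F3) : F3 := fun x y z =>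
  (Real.exp z : ℂ) * DX u x y z + (Bx : ℂ) * u x y z
/-- `e^{−z} D_y + B_y`. -/
noncomputable def PY (By : ℝ) (u : F3) : F3 := fun x y z =>
  (Real.exp (-z) : ℂ) * DY u x y z + (By : ℂ) * u x y z
/-- The magnetic Schrödinger operator
`H = (1/2)((e^z D_x + B_x)² + (e^{−z} D_y + B_y)² + D_z²)` on `Sol`. -/
noncomputable def Hop (Bx By : ℝ) (u : F3) : F3 := fun x y z =>
  (1/2) * (PX Bx (PX Bx u) x y z + PY By (PY By u) x y z + DZ (DZ u) x y z)

/-- `K_x = e^z D_x + sin φ (B − 1/2 − i D_z)`. -/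
noncomputable def Kx (B phi : ℝ) (u : F3) : F3 := fun x y z =>
  (Real.exp z : ℂ) * DX u x y z
    + (Real.sin phi : ℂ) * (((B : ℂ) - 1/2) * u x y z - Complex.I * DZ u x y z)
/-- `K_x† = e^z D_x + sin φ (B − 1/2 + i D_z)`. -/
noncomputable def Kxdag (B phi : ℝ) (u : F3) : F3 := fun x y z =>
  (Real.exp z : ℂ) * DX u x y z
    + (Real.sin phi : ℂ) * (((B : ℂ) - 1/2) * u x y z + Complex.I * DZ u x y z)
/-- `K_y = e^{−z} D_y + cos φ (B − 1/2 + i D_z)`. -/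
noncomputable def Ky (B phi : ℝ) (u : F3) : F3 := fun x y z =>
  (Real.exp (-z) : ℂ) * DY u x y z
    + (Real.cos phi : ℂ) * (((B : ℂ) - 1/2) * u x y z + Complex.I * DZ u x y z)
/-- `K_y† = e^{−z} D_y + cos φ (B − 1/2 − i D_z)`. -/
noncomputable def Kydag (B phi : ℝ) (u : F3) : F3 := fun x y z =>
  (Real.exp (-z) : ℂ) * DY u x y z
    + (Real.cos phi : ℂ) * (((B : ℂ) - 1/2) * u x y z - Complex.I * DZ u x y z)


open Complex


namespace SolAux

noncomputable def pd (v : ℝ × ℝ × ℝ) (g : ℝ × ℝ × ℝ → ℂ) : ℝ × ℝ × ℝ → ℂ :=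
  fun p => fderiv ℝ g p v

lemma pd_contDiff {g : ℝ × ℝ × ℝ → ℂ} (hg : ContDiff ℝ (⊤ : ℕ∞) g) (v : ℝ × ℝ × ℝ) :
    ContDiff ℝ (⊤ : ℕ∞) (pd v g) :=
  (hg.fderiv_right (le_refl _)).clm_apply contDiff_const

lemma pd_hasCompactSupport {g : ℝ × ℝ × ℝ → ℂ} (hg : HasCompactSupport g) (v : ℝ × ℝ × ℝ) :
    HasCompactSupport (pd v g) :=
  (hg.fderiv (𝕜 := ℝ)).comp_left (g := fun L : (ℝ × ℝ × ℝ) →L[ℝ] ℂ => L v) (by simp)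

lemma hasDerivAt_slice1 {g : ℝ × ℝ × ℝ → ℂ} (hg : ContDiff ℝ (⊤ : ℕ∞) g) (x y z : ℝ) :
    HasDerivAt (fun t => g (t, y, z)) (pd (1,0,0) g (x, y, z)) x := by
  have h := (hg.differentiable (by simp) (x,y,z)).hasFDerivAt
  have hl : HasDerivAt (fun t : ℝ => ((t, y, z) : ℝ × ℝ × ℝ)) ((1:ℝ),(0:ℝ),(0:ℝ)) x :=
    (hasDerivAt_id x).prodMk ((hasDerivAt_const x y).prodMk (hasDerivAt_const x z))
  exact h.comp_hasDerivAt x hl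

lemma hasDerivAt_slice2 {g : ℝ × ℝ × ℝ → ℂ} (hg : ContDiff ℝ (⊤ : ℕ∞) g) (x y z : ℝ) :
    HasDerivAt (fun t => g (x, t, z)) (pd (0,1,0) g (x, y, z)) y := by
  have h := (hg.differentiable (by simp) (x,y,z)).hasFDerivAt
  have hl : HasDerivAt (fun t : ℝ => ((x, t, z) : ℝ × ℝ × ℝ)) ((0:ℝ),(1:ℝ),(0:ℝ)) y :=
    (hasDerivAt_const y x).prodMk ((hasDerivAt_id y).prodMk (hasDerivAt_const y z))
  exact h.comp_hasDerivAt y hl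

lemma hasDerivAt_slice3 {g : ℝ × ℝ × ℝ → ℂ} (hg : ContDiff ℝ (⊤ : ℕ∞) g) (x y z : ℝ) :
    HasDerivAt (fun t => g (x, y, t)) (pd (0,0,1) g (x, y, z)) z := by
  have h := (hg.differentiable (by simp) (x,y,z)).hasFDerivAt
  have hl : HasDerivAt (fun t : ℝ => ((x, y, t) : ℝ × ℝ × ℝ)) ((0:ℝ),(0:ℝ),(1:ℝ)) z :=
    (hasDerivAt_const z x).prodMk ((hasDerivAt_const z y).prodMk (hasDerivAt_id z))
  exact h.comp_hasDerivAt z hl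

lemma pd_comm {g : ℝ × ℝ × ℝ → ℂ} (hg : ContDiff ℝ (⊤ : ℕ∞) g) (v w p : ℝ × ℝ × ℝ) :
    pd v (pd w g) p = pd w (pd v g) p := by
  have h1 : ContDiff ℝ (⊤ : ℕ∞) (fderiv ℝ g) := hg.fderiv_right (le_refl _)
  have key : ∀ a b : ℝ × ℝ × ℝ, pd a (pd b g) p = fderiv ℝ (fderiv ℝ g) p a b := by
    intro a b
    have : fderiv ℝ (fun q => fderiv ℝ g q b) p
        = (fderiv ℝ (fderiv ℝ g) p).flip b := by
      have := fderiv_clm_apply (h1.differentiable (by simp) p)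
        (differentiableAt_const b)
      simpa using this
    show fderiv ℝ (fun q => fderiv ℝ g q b) p a = _
    rw [this]
    simp
  rw [key v w, key w v]
  exact second_derivative_symmetric (fun q => (hg.differentiable (by simp) q).hasFDerivAt)
    ((h1.differentiable (by simp) p).hasFDerivAt) v w




lemma pd_add {g h : ℝ × ℝ × ℝ → ℂ} (hg : Differentiable ℝ g) (hh : Differentiable ℝ h)
    (v p : ℝ × ℝ × ℝ) : pd v (fun q => g q + h q) p = pd v g p + pd v h p := by
  simp [pd, fderiv_fun_add (hg p) (hh p)]

lemma pd_sub {g h : ℝ × ℝ × ℝ → ℂ} (hg : Differentiable ℝ g) (hh : Differentiable ℝ h)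
    (v p : ℝ × ℝ × ℝ) : pd v (fun q => g q - h q) p = pd v g p - pd v h p := by
  simp [pd, fderiv_fun_sub (hg p) (hh p)]

lemma pd_const_mul {g : ℝ × ℝ × ℝ → ℂ} (hg : Differentiable ℝ g) (a : ℂ)
    (v p : ℝ × ℝ × ℝ) : pd v (fun q => a * g q) p = a * pd v g p := by
  simp [pd, fderiv_const_mul (hg p) a]

lemma pd_mul {g h : ℝ × ℝ × ℝ → ℂ} (hg : Differentiable ℝ g) (hh : Differentiable ℝ h)
    (v p : ℝ × ℝ × ℝ) : pd v (fun q => g q * h q) p = g p * pd v h p + h p * pd v g p := by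
  simp [pd, fderiv_fun_mul (hg p) (hh p)]

lemma pd_conj {g : ℝ × ℝ × ℝ → ℂ} (hg : Differentiable ℝ g) (v p : ℝ × ℝ × ℝ) :
    pd v (fun q => (starRingEnd ℂ) (g q)) p = (starRingEnd ℂ) (pd v g p) := by
  have h : HasFDerivAt (fun q => (starRingEnd ℂ) (g q))
      ((Complex.conjCLE.toContinuousLinearMap).comp (fderiv ℝ g p)) p :=
    (Complex.conjCLE.toContinuousLinearMap.hasFDerivAt).comp p (hg p).hasFDerivAt
  simp [pd, h.fderiv]

noncomputable def EZ : ℝ × ℝ × ℝ → ℂ := fun q => (Real.exp q.2.2 : ℂ)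
noncomputable def EZ' : ℝ × ℝ × ℝ → ℂ := fun q => (Real.exp (-q.2.2) : ℂ)

noncomputable def L33 : (ℝ × ℝ × ℝ) →L[ℝ] ℝ :=
  (ContinuousLinearMap.snd ℝ ℝ ℝ).comp (ContinuousLinearMap.snd ℝ ℝ (ℝ × ℝ))

lemma pd_EZ (v p : ℝ × ℝ × ℝ) : pd v EZ p = (v.2.2 : ℂ) * (Real.exp p.2.2 : ℂ) := by
  have h2 : HasFDerivAt (fun q : ℝ × ℝ × ℝ => q.2.2) L33 p := L33.hasFDerivAt
  have h3 := (Real.hasDerivAt_exp p.2.2).comp_hasFDerivAt p h2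
  have h4 : HasFDerivAt EZ (Complex.ofRealCLM.comp (Real.exp p.2.2 • L33)) p :=
    Complex.ofRealCLM.hasFDerivAt.comp p h3
  simp [pd, h4.fderiv, L33]
  push_cast
  ring

lemma pd_EZ' (v p : ℝ × ℝ × ℝ) : pd v EZ' p = -((v.2.2 : ℂ) * (Real.exp (-p.2.2) : ℂ)) := by
  have h2 : HasFDerivAt (fun q : ℝ × ℝ × ℝ => q.2.2) L33 p := L33.hasFDerivAt
  have h0 : HasDerivAt (fun t : ℝ => Real.exp (-t)) (-Real.exp (-p.2.2)) p.2.2 := by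
    simpa [Function.comp_def] using (Real.hasDerivAt_exp (-p.2.2)).comp p.2.2 (hasDerivAt_neg p.2.2)
  have h3 := h0.comp_hasFDerivAt p h2
  have h4 : HasFDerivAt EZ' (Complex.ofRealCLM.comp ((-Real.exp (-p.2.2)) • L33)) p :=
    Complex.ofRealCLM.hasFDerivAt.comp p h3
  simp [pd, h4.fderiv, L33]
  push_cast
  ring

lemma contDiff_EZ : ContDiff ℝ (⊤ : ℕ∞) EZ :=
  Complex.ofRealCLM.contDiff.comp ((Real.contDiff_exp.of_le le_top).comp
    (contDiff_snd.comp contDiff_snd))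

lemma contDiff_EZ' : ContDiff ℝ (⊤ : ℕ∞) EZ' :=
  Complex.ofRealCLM.contDiff.comp ((Real.contDiff_exp.of_le le_top).comp
    ((contDiff_snd.comp contDiff_snd).neg))



lemma oneD {h : ℝ → ℂ} (hd : Differentiable ℝ h) (hdc : Continuous (deriv h))
    {R : ℝ} (hR0 : 0 ≤ R) (hR : ∀ t, R < |t| → h t = 0) : ∫ t, deriv h t = 0 := by
  have hzero : ∀ t, R < |t| → deriv h t = 0 := by
    intro t ht
    have hop : IsOpen {s : ℝ | R < |s|} := isOpen_lt continuous_const continuous_abs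
    have hev : h =ᶠ[nhds t] fun _ => 0 :=
      Filter.eventuallyEq_of_mem (hop.mem_nhds ht) fun s hs => hR s hs
    rw [hev.deriv_eq, deriv_const]
  have hsupp : Function.support (deriv h) ⊆ Set.Ioc (-(R+1)) (R+1) := by
    intro t ht
    simp only [Function.mem_support] at ht
    by_contra hmem
    apply ht
    apply hzero
    simp only [Set.mem_Ioc, not_and_or, not_lt, not_le] at hmem
    rcases hmem with h1 | h2
    · rw [abs_of_nonpos (by linarith)]; linarith
    · rw [abs_of_pos (by linarith)]; linarith
  rw [← intervalIntegral.integral_eq_integral_of_support_subset hsupp,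
    intervalIntegral.integral_deriv_eq_sub (fun x _ => hd x)
      ((hdc.intervalIntegrable _ _)),
    hR _ (by rw [abs_of_pos (by linarith)]; linarith),
    hR _ (by rw [abs_of_nonpos (by linarith)]; linarith), sub_zero]

lemma sectionCS {F : ℝ × ℝ × ℝ → ℂ} (hF : HasCompactSupport F) (x : ℝ) :
    HasCompactSupport (fun q : ℝ × ℝ => F (x, q)) := by
  apply HasCompactSupport.intro (hF.image continuous_snd)
  intro q hq
  by_contra hne
  exact hq ⟨(x, q), subset_tsupport _ hne, rfl⟩

variable {g : ℝ × ℝ × ℝ → ℂ}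

lemma bound_exists (hgc : HasCompactSupport g) :
    ∃ R : ℝ, 0 ≤ R ∧ ∀ p : ℝ × ℝ × ℝ, R < ‖p‖ → g p = 0 := by
  obtain ⟨R, hR0, hsub⟩ := hgc.isBounded.subset_closedBall_lt 0 0
  refine ⟨R, hR0.le, fun p hp => ?_⟩
  apply image_eq_zero_of_notMem_tsupport
  intro hmem
  have := hsub hmem
  simp only [Metric.mem_closedBall, dist_zero_right] at this
  linarith

lemma slice3_int (hg : ContDiff ℝ (⊤ : ℕ∞) g) {R : ℝ} (hR0 : 0 ≤ R)
    (hRv : ∀ p : ℝ × ℝ × ℝ, R < ‖p‖ → g p = 0) (x y : ℝ) :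
    ∫ z, pd (0,0,1) g (x, y, z) = 0 := by
  have hslice : ∀ z, deriv (fun t => g (x, y, t)) z = pd (0,0,1) g (x, y, z) :=
    fun z => (hasDerivAt_slice3 hg x y z).deriv
  have hde : deriv (fun t => g (x, y, t)) = fun z => pd (0,0,1) g (x, y, z) := funext hslice
  have h0 : (∫ z, pd (0,0,1) g (x, y, z)) = ∫ z, deriv (fun t => g (x, y, t)) z := by
    rw [hde]
  rw [h0]
  apply oneD (fun z => (hasDerivAt_slice3 hg x y z).differentiableAt) _ hR0
  · intro t ht
    apply hRv
    calc R < |t| := ht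
    _ = ‖((x,y,t) : ℝ × ℝ × ℝ).2.2‖ := rfl
    _ ≤ ‖((x,y,t) : ℝ × ℝ × ℝ).2‖ := norm_snd_le _
    _ ≤ ‖((x,y,t) : ℝ × ℝ × ℝ)‖ := norm_snd_le _
  · rw [hde]
    exact ((pd_contDiff hg _).continuous).comp
      (Continuous.prodMk continuous_const (Continuous.prodMk continuous_const continuous_id))

lemma slice2_int (hg : ContDiff ℝ (⊤ : ℕ∞) g) {R : ℝ} (hR0 : 0 ≤ R)
    (hRv : ∀ p : ℝ × ℝ × ℝ, R < ‖p‖ → g p = 0) (x z : ℝ) :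
    ∫ y, pd (0,1,0) g (x, y, z) = 0 := by
  have hslice : ∀ y, deriv (fun t => g (x, t, z)) y = pd (0,1,0) g (x, y, z) :=
    fun y => (hasDerivAt_slice2 hg x y z).deriv
  have hde : deriv (fun t => g (x, t, z)) = fun y => pd (0,1,0) g (x, y, z) := funext hslice
  have h0 : (∫ y, pd (0,1,0) g (x, y, z)) = ∫ y, deriv (fun t => g (x, t, z)) y := by
    rw [hde]
  rw [h0]
  apply oneD (fun y => (hasDerivAt_slice2 hg x y z).differentiableAt) _ hR0
  · intro t ht
    apply hRv
    calc R < |t| := ht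
    _ = ‖((x,t,z) : ℝ × ℝ × ℝ).2.1‖ := rfl
    _ ≤ ‖((x,t,z) : ℝ × ℝ × ℝ).2‖ := norm_fst_le _
    _ ≤ ‖((x,t,z) : ℝ × ℝ × ℝ)‖ := norm_snd_le _
  · rw [hde]
    exact ((pd_contDiff hg _).continuous).comp
      (Continuous.prodMk continuous_const (Continuous.prodMk continuous_id continuous_const))

lemma slice1_int (hg : ContDiff ℝ (⊤ : ℕ∞) g) {R : ℝ} (hR0 : 0 ≤ R)
    (hRv : ∀ p : ℝ × ℝ × ℝ, R < ‖p‖ → g p = 0) (y z : ℝ) :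
    ∫ x, pd (1,0,0) g (x, y, z) = 0 := by
  have hslice : ∀ x, deriv (fun t => g (t, y, z)) x = pd (1,0,0) g (x, y, z) :=
    fun x => (hasDerivAt_slice1 hg x y z).deriv
  have hde : deriv (fun t => g (t, y, z)) = fun x => pd (1,0,0) g (x, y, z) := funext hslice
  have h0 : (∫ x, pd (1,0,0) g (x, y, z)) = ∫ x, deriv (fun t => g (t, y, z)) x := by
    rw [hde]
  rw [h0]
  apply oneD (fun x => (hasDerivAt_slice1 hg x y z).differentiableAt) _ hR0
  · intro t ht
    apply hRv
    calc R < |t| := ht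
    _ = ‖((t,y,z) : ℝ × ℝ × ℝ).1‖ := rfl
    _ ≤ ‖((t,y,z) : ℝ × ℝ × ℝ)‖ := norm_fst_le _
  · rw [hde]
    exact ((pd_contDiff hg _).continuous).comp
      (Continuous.prodMk continuous_id (Continuous.prodMk continuous_const continuous_const))

lemma integrable_pd (hg : ContDiff ℝ (⊤ : ℕ∞) g) (hgc : HasCompactSupport g)
    (v : ℝ × ℝ × ℝ) : Integrable (pd v g) :=
  ((pd_contDiff hg v).continuous).integrable_of_hasCompactSupport (pd_hasCompactSupport hgc v)

lemma integral_pd3 (hg : ContDiff ℝ (⊤ : ℕ∞) g) (hgc : HasCompactSupport g) :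
    ∫ p : ℝ × ℝ × ℝ, pd (0,0,1) g p = 0 := by
  obtain ⟨R, hR0, hRv⟩ := bound_exists hgc
  have hint : Integrable (pd (0,0,1) g) := integrable_pd hg hgc _
  rw [Measure.volume_eq_prod] at hint
  rw [show (volume : Measure (ℝ × ℝ × ℝ)) = (volume : Measure ℝ).prod volume from Measure.volume_eq_prod .. ,
    integral_prod _ hint]
  have inner : ∀ x : ℝ, (∫ q : ℝ × ℝ, pd (0,0,1) g (x, q)) = 0 := by
    intro x
    have hintx : Integrable (fun q : ℝ × ℝ => pd (0,0,1) g (x, q)) := by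
      have : Continuous (fun q : ℝ × ℝ => pd (0,0,1) g (x, q)) :=
        ((pd_contDiff hg _).continuous).comp (Continuous.prodMk continuous_const continuous_id)
      exact this.integrable_of_hasCompactSupport (sectionCS (pd_hasCompactSupport hgc _) x)
    rw [Measure.volume_eq_prod] at hintx
    rw [show (volume : Measure (ℝ × ℝ)) = (volume : Measure ℝ).prod volume from Measure.volume_eq_prod .. ,
      integral_prod _ hintx]
    have : ∀ y : ℝ, (∫ z : ℝ, pd (0,0,1) g (x, y, z)) = 0 := slice3_int hg hR0 hRv x
    simp only [this, integral_zero]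
  simp only [inner, integral_zero]

lemma integral_pd1 (hg : ContDiff ℝ (⊤ : ℕ∞) g) (hgc : HasCompactSupport g) :
    ∫ p : ℝ × ℝ × ℝ, pd (1,0,0) g p = 0 := by
  obtain ⟨R, hR0, hRv⟩ := bound_exists hgc
  have hint : Integrable (pd (1,0,0) g) := integrable_pd hg hgc _
  rw [Measure.volume_eq_prod] at hint
  rw [show (volume : Measure (ℝ × ℝ × ℝ)) = (volume : Measure ℝ).prod volume from Measure.volume_eq_prod .. ,
    integral_prod_symm _ hint]
  have inner : ∀ q : ℝ × ℝ, (∫ x : ℝ, pd (1,0,0) g (x, q)) = 0 := by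
    intro q
    have := slice1_int hg hR0 hRv q.1 q.2
    simpa using this
  simp only [inner, integral_zero]

lemma integral_pd2 (hg : ContDiff ℝ (⊤ : ℕ∞) g) (hgc : HasCompactSupport g) :
    ∫ p : ℝ × ℝ × ℝ, pd (0,1,0) g p = 0 := by
  obtain ⟨R, hR0, hRv⟩ := bound_exists hgc
  have hint : Integrable (pd (0,1,0) g) := integrable_pd hg hgc _
  rw [Measure.volume_eq_prod] at hint
  rw [show (volume : Measure (ℝ × ℝ × ℝ)) = (volume : Measure ℝ).prod volume from Measure.volume_eq_prod .. ,
    integral_prod _ hint]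
  have inner : ∀ x : ℝ, (∫ q : ℝ × ℝ, pd (0,1,0) g (x, q)) = 0 := by
    intro x
    have hintx : Integrable (fun q : ℝ × ℝ => pd (0,1,0) g (x, q)) := by
      have : Continuous (fun q : ℝ × ℝ => pd (0,1,0) g (x, q)) :=
        ((pd_contDiff hg _).continuous).comp (Continuous.prodMk continuous_const continuous_id)
      exact this.integrable_of_hasCompactSupport (sectionCS (pd_hasCompactSupport hgc _) x)
    rw [Measure.volume_eq_prod] at hintx
    rw [show (volume : Measure (ℝ × ℝ)) = (volume : Measure ℝ).prod volume from Measure.volume_eq_prod .. ,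
      integral_prod_symm _ hintx]
    have : ∀ z : ℝ, (∫ y : ℝ, pd (0,1,0) g (x, y, z)) = 0 := slice2_int hg hR0 hRv x
    simp only [this, integral_zero]
  simp only [inner, integral_zero]

end SolAux



open SolAux

/-- Uncurried version of `u`. -/
noncomputable def UC (u : F3) : ℝ × ℝ × ℝ → ℂ := fun p => u p.1 p.2.1 p.2.2

/-- Uncurried `K_x u`. -/
noncomputable def VX (B phi : ℝ) (g : ℝ × ℝ × ℝ → ℂ) : ℝ × ℝ × ℝ → ℂ := fun p =>
  EZ p * (-Complex.I * pd (1,0,0) g p)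
    + (Real.sin phi : ℂ) * (((B : ℂ) - 1/2) * g p
        - Complex.I * (-Complex.I * pd (0,0,1) g p))

/-- Uncurried `K_y u`. -/
noncomputable def VY (B phi : ℝ) (g : ℝ × ℝ × ℝ → ℂ) : ℝ × ℝ × ℝ → ℂ := fun p =>
  EZ' p * (-Complex.I * pd (0,1,0) g p)
    + (Real.cos phi : ℂ) * (((B : ℂ) - 1/2) * g p
        + Complex.I * (-Complex.I * pd (0,0,1) g p))

/-- Uncurried `PX u`. -/
noncomputable def WX (Bx : ℝ) (g : ℝ × ℝ × ℝ → ℂ) : ℝ × ℝ × ℝ → ℂ := fun p =>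
  EZ p * (-Complex.I * pd (1,0,0) g p) + (Bx : ℂ) * g p

/-- Uncurried `PY u`. -/
noncomputable def WY (By : ℝ) (g : ℝ × ℝ × ℝ → ℂ) : ℝ × ℝ × ℝ → ℂ := fun p =>
  EZ' p * (-Complex.I * pd (0,1,0) g p) + (By : ℂ) * g p

/-- Uncurried `DZ u`. -/
noncomputable def WZ (g : ℝ × ℝ × ℝ → ℂ) : ℝ × ℝ × ℝ → ℂ := fun p =>
  -Complex.I * pd (0,0,1) g p

variable {u : F3}

lemma Kx_eq (B phi : ℝ) (hg : ContDiff ℝ (⊤ : ℕ∞) (UC u)) :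
    ∀ x y z : ℝ, Kx B phi u x y z = VX B phi (UC u) (x, y, z) := by
  intro x y z
  have e1 : deriv (fun t => u t y z) x = pd (1,0,0) (UC u) (x,y,z) :=
    (hasDerivAt_slice1 hg x y z).deriv
  have e3 : deriv (fun t => u x y t) z = pd (0,0,1) (UC u) (x,y,z) :=
    (hasDerivAt_slice3 hg x y z).deriv
  simp only [Kx, DX, DZ, VX, EZ, UC, e1, e3]

lemma Ky_eq (B phi : ℝ) (hg : ContDiff ℝ (⊤ : ℕ∞) (UC u)) :
    ∀ x y z : ℝ, Ky B phi u x y z = VY B phi (UC u) (x, y, z) := by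
  intro x y z
  have e2 : deriv (fun t => u x t z) y = pd (0,1,0) (UC u) (x,y,z) :=
    (hasDerivAt_slice2 hg x y z).deriv
  have e3 : deriv (fun t => u x y t) z = pd (0,0,1) (UC u) (x,y,z) :=
    (hasDerivAt_slice3 hg x y z).deriv
  simp only [Ky, DY, DZ, VY, EZ', UC, e2, e3]

lemma PX_eq (Bx : ℝ) (hg : ContDiff ℝ (⊤ : ℕ∞) (UC u)) :
    ∀ x y z : ℝ, PX Bx u x y z = WX Bx (UC u) (x, y, z) := by
  intro x y z
  have e1 : deriv (fun t => u t y z) x = pd (1,0,0) (UC u) (x,y,z) :=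
    (hasDerivAt_slice1 hg x y z).deriv
  simp only [PX, DX, WX, EZ, UC, e1]

lemma PY_eq (By : ℝ) (hg : ContDiff ℝ (⊤ : ℕ∞) (UC u)) :
    ∀ x y z : ℝ, PY By u x y z = WY By (UC u) (x, y, z) := by
  intro x y z
  have e2 : deriv (fun t => u x t z) y = pd (0,1,0) (UC u) (x,y,z) :=
    (hasDerivAt_slice2 hg x y z).deriv
  simp only [PY, DY, WY, EZ', UC, e2]

lemma DZ_eq (hg : ContDiff ℝ (⊤ : ℕ∞) (UC u)) :
    ∀ x y z : ℝ, DZ u x y z = WZ (UC u) (x, y, z) := by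
  intro x y z
  have e3 : deriv (fun t => u x y t) z = pd (0,0,1) (UC u) (x,y,z) :=
    (hasDerivAt_slice3 hg x y z).deriv
  simp only [DZ, WZ, UC, e3]

lemma contDiff_conj {g : ℝ × ℝ × ℝ → ℂ} (hg : ContDiff ℝ (⊤ : ℕ∞) g) :
    ContDiff ℝ (⊤ : ℕ∞) (fun q => (starRingEnd ℂ) (g q)) :=
  Complex.conjCLE.toContinuousLinearMap.contDiff.comp hg

lemma VX_contDiff (B phi : ℝ) {g : ℝ × ℝ × ℝ → ℂ} (hg : ContDiff ℝ (⊤ : ℕ∞) g) :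
    ContDiff ℝ (⊤ : ℕ∞) (VX B phi g) :=
  (contDiff_EZ.mul (contDiff_const.mul (pd_contDiff hg _))).add
    (contDiff_const.mul ((contDiff_const.mul hg).sub
      (contDiff_const.mul (contDiff_const.mul (pd_contDiff hg _)))))

lemma VY_contDiff (B phi : ℝ) {g : ℝ × ℝ × ℝ → ℂ} (hg : ContDiff ℝ (⊤ : ℕ∞) g) :
    ContDiff ℝ (⊤ : ℕ∞) (VY B phi g) :=
  (contDiff_EZ'.mul (contDiff_const.mul (pd_contDiff hg _))).add
    (contDiff_const.mul ((contDiff_const.mul hg).add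
      (contDiff_const.mul (contDiff_const.mul (pd_contDiff hg _)))))

lemma WX_contDiff (Bx : ℝ) {g : ℝ × ℝ × ℝ → ℂ} (hg : ContDiff ℝ (⊤ : ℕ∞) g) :
    ContDiff ℝ (⊤ : ℕ∞) (WX Bx g) :=
  (contDiff_EZ.mul (contDiff_const.mul (pd_contDiff hg _))).add (contDiff_const.mul hg)

lemma WY_contDiff (By : ℝ) {g : ℝ × ℝ × ℝ → ℂ} (hg : ContDiff ℝ (⊤ : ℕ∞) g) :
    ContDiff ℝ (⊤ : ℕ∞) (WY By g) :=
  (contDiff_EZ'.mul (contDiff_const.mul (pd_contDiff hg _))).add (contDiff_const.mul hg)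

lemma WZ_contDiff {g : ℝ × ℝ × ℝ → ℂ} (hg : ContDiff ℝ (⊤ : ℕ∞) g) :
    ContDiff ℝ (⊤ : ℕ∞) (WZ g) :=
  contDiff_const.mul (pd_contDiff hg _)

lemma pd_eq_zero_of_nmem {g : ℝ × ℝ × ℝ → ℂ} {p : ℝ × ℝ × ℝ} (hp : p ∉ tsupport g)
    (v : ℝ × ℝ × ℝ) : pd v g p = 0 := by
  by_contra hne
  apply hp
  apply support_fderiv_subset ℝ (f := g)
  intro h0
  apply hne
  simp only [pd, h0]
  rfl

lemma VX_hcs (B phi : ℝ) {g : ℝ × ℝ × ℝ → ℂ} (hgc : HasCompactSupport g) :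
    HasCompactSupport (VX B phi g) := by
  apply HasCompactSupport.intro hgc
  intro p hp
  simp [VX, pd_eq_zero_of_nmem hp, image_eq_zero_of_notMem_tsupport hp]

lemma VY_hcs (B phi : ℝ) {g : ℝ × ℝ × ℝ → ℂ} (hgc : HasCompactSupport g) :
    HasCompactSupport (VY B phi g) := by
  apply HasCompactSupport.intro hgc
  intro p hp
  simp [VY, pd_eq_zero_of_nmem hp, image_eq_zero_of_notMem_tsupport hp]

lemma VX_def (B phi : ℝ) (g : ℝ × ℝ × ℝ → ℂ) : VX B phi g = fun p =>
    EZ p * (-Complex.I * pd (1,0,0) g p)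
      + (Real.sin phi : ℂ) * (((B : ℂ) - 1/2) * g p
          - Complex.I * (-Complex.I * pd (0,0,1) g p)) := rfl

lemma VY_def (B phi : ℝ) (g : ℝ × ℝ × ℝ → ℂ) : VY B phi g = fun p =>
    EZ' p * (-Complex.I * pd (0,1,0) g p)
      + (Real.cos phi : ℂ) * (((B : ℂ) - 1/2) * g p
          + Complex.I * (-Complex.I * pd (0,0,1) g p)) := rfl

lemma WX_def (Bx : ℝ) (g : ℝ × ℝ × ℝ → ℂ) : WX Bx g = fun p =>
    EZ p * (-Complex.I * pd (1,0,0) g p) + (Bx : ℂ) * g p := rfl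

lemma WY_def (By : ℝ) (g : ℝ × ℝ × ℝ → ℂ) : WY By g = fun p =>
    EZ' p * (-Complex.I * pd (0,1,0) g p) + (By : ℂ) * g p := rfl

lemma WZ_def (g : ℝ × ℝ × ℝ → ℂ) : WZ g = fun p => -Complex.I * pd (0,0,1) g p := rfl

lemma cd_diff {g : ℝ × ℝ × ℝ → ℂ} (hg : ContDiff ℝ (⊤ : ℕ∞) g) : Differentiable ℝ g :=
  hg.differentiable (by simp)

lemma pd_VX (B phi : ℝ) {g : ℝ × ℝ × ℝ → ℂ} (hg : ContDiff ℝ (⊤ : ℕ∞) g)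
    (v p : ℝ × ℝ × ℝ) :
    pd v (VX B phi g) p
      = (EZ p * (-Complex.I * pd v (pd (1,0,0) g) p)
          + (-Complex.I * pd (1,0,0) g p) * ((v.2.2 : ℂ) * EZ p))
        + (Real.sin phi : ℂ) * (((B : ℂ) - 1/2) * pd v g p
            - Complex.I * (-Complex.I * pd v (pd (0,0,1) g) p)) := by
  have hg' := cd_diff hg
  have h1 := cd_diff (pd_contDiff hg ((1:ℝ),(0:ℝ),(0:ℝ)))
  have h3 := cd_diff (pd_contDiff hg ((0:ℝ),(0:ℝ),(1:ℝ)))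
  have dEZ := cd_diff contDiff_EZ
  have dA : Differentiable ℝ (fun q => -Complex.I * pd (1,0,0) g q) :=
    (differentiable_const _).mul h1
  have dB1 : Differentiable ℝ (fun q => ((B:ℂ)-1/2) * g q) := (differentiable_const _).mul hg'
  have dmI3 : Differentiable ℝ (fun q => -Complex.I * pd (0,0,1) g q) :=
    (differentiable_const _).mul h3
  have dB2 : Differentiable ℝ (fun q => Complex.I * (-Complex.I * pd (0,0,1) g q)) :=
    (differentiable_const _).mul dmI3
  rw [VX_def, pd_add (dEZ.fun_mul dA) ((differentiable_const _).fun_mul (dB1.fun_sub dB2)),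
    pd_mul dEZ dA, pd_const_mul h1 (-Complex.I),
    pd_const_mul (dB1.fun_sub dB2) _, pd_sub dB1 dB2, pd_const_mul hg' _,
    pd_const_mul dmI3 _, pd_const_mul h3 (-Complex.I), pd_EZ]
  simp only [EZ]

lemma pd_VY (B phi : ℝ) {g : ℝ × ℝ × ℝ → ℂ} (hg : ContDiff ℝ (⊤ : ℕ∞) g)
    (v p : ℝ × ℝ × ℝ) :
    pd v (VY B phi g) p
      = (EZ' p * (-Complex.I * pd v (pd (0,1,0) g) p)
          + (-Complex.I * pd (0,1,0) g p) * (-((v.2.2 : ℂ) * EZ' p)))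
        + (Real.cos phi : ℂ) * (((B : ℂ) - 1/2) * pd v g p
            + Complex.I * (-Complex.I * pd v (pd (0,0,1) g) p)) := by
  have hg' := cd_diff hg
  have h2 := cd_diff (pd_contDiff hg ((0:ℝ),(1:ℝ),(0:ℝ)))
  have h3 := cd_diff (pd_contDiff hg ((0:ℝ),(0:ℝ),(1:ℝ)))
  have dEZ' := cd_diff contDiff_EZ'
  have dA : Differentiable ℝ (fun q => -Complex.I * pd (0,1,0) g q) :=
    (differentiable_const _).mul h2
  have dB1 : Differentiable ℝ (fun q => ((B:ℂ)-1/2) * g q) := (differentiable_const _).mul hg'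
  have dmI3 : Differentiable ℝ (fun q => -Complex.I * pd (0,0,1) g q) :=
    (differentiable_const _).mul h3
  have dB2 : Differentiable ℝ (fun q => Complex.I * (-Complex.I * pd (0,0,1) g q)) :=
    (differentiable_const _).mul dmI3
  rw [VY_def, pd_add (dEZ'.fun_mul dA) ((differentiable_const _).fun_mul (dB1.fun_add dB2)),
    pd_mul dEZ' dA, pd_const_mul h2 (-Complex.I),
    pd_const_mul (dB1.fun_add dB2) _, pd_add dB1 dB2, pd_const_mul hg' _,
    pd_const_mul dmI3 _, pd_const_mul h3 (-Complex.I), pd_EZ']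
  simp only [EZ']

lemma pd_WX (Bx : ℝ) {g : ℝ × ℝ × ℝ → ℂ} (hg : ContDiff ℝ (⊤ : ℕ∞) g)
    (v p : ℝ × ℝ × ℝ) :
    pd v (WX Bx g) p
      = (EZ p * (-Complex.I * pd v (pd (1,0,0) g) p)
          + (-Complex.I * pd (1,0,0) g p) * ((v.2.2 : ℂ) * EZ p))
        + (Bx : ℂ) * pd v g p := by
  have hg' := cd_diff hg
  have h1 := cd_diff (pd_contDiff hg ((1:ℝ),(0:ℝ),(0:ℝ)))
  have dEZ := cd_diff contDiff_EZ
  have dA : Differentiable ℝ (fun q => -Complex.I * pd (1,0,0) g q) :=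
    (differentiable_const _).mul h1
  rw [WX_def, pd_add (dEZ.fun_mul dA) ((differentiable_const _).fun_mul hg'),
    pd_mul dEZ dA, pd_const_mul h1 (-Complex.I), pd_const_mul hg' _, pd_EZ]
  simp only [EZ]

lemma pd_WY (By : ℝ) {g : ℝ × ℝ × ℝ → ℂ} (hg : ContDiff ℝ (⊤ : ℕ∞) g)
    (v p : ℝ × ℝ × ℝ) :
    pd v (WY By g) p
      = (EZ' p * (-Complex.I * pd v (pd (0,1,0) g) p)
          + (-Complex.I * pd (0,1,0) g p) * (-((v.2.2 : ℂ) * EZ' p)))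
        + (By : ℂ) * pd v g p := by
  have hg' := cd_diff hg
  have h2 := cd_diff (pd_contDiff hg ((0:ℝ),(1:ℝ),(0:ℝ)))
  have dEZ' := cd_diff contDiff_EZ'
  have dA : Differentiable ℝ (fun q => -Complex.I * pd (0,1,0) g q) :=
    (differentiable_const _).mul h2
  rw [WY_def, pd_add (dEZ'.fun_mul dA) ((differentiable_const _).fun_mul hg'),
    pd_mul dEZ' dA, pd_const_mul h2 (-Complex.I), pd_const_mul hg' _, pd_EZ']
  simp only [EZ']

lemma pd_WZ {g : ℝ × ℝ × ℝ → ℂ} (hg : ContDiff ℝ (⊤ : ℕ∞) g) (v p : ℝ × ℝ × ℝ) :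
    pd v (WZ g) p = -Complex.I * pd v (pd (0,0,1) g) p := by
  have h3 := cd_diff (pd_contDiff hg ((0:ℝ),(0:ℝ),(1:ℝ)))
  rw [WZ_def, pd_const_mul h3 (-Complex.I)]

lemma PX_app (Bx : ℝ) {v : F3} (hv : ContDiff ℝ (⊤ : ℕ∞) (UC v)) (x y z : ℝ) :
    PX Bx v x y z = EZ (x,y,z) * (-Complex.I * pd (1,0,0) (UC v) (x,y,z))
      + (Bx : ℂ) * UC v (x,y,z) := by
  have e1 : deriv (fun t => v t y z) x = pd (1,0,0) (UC v) (x,y,z) :=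
    (hasDerivAt_slice1 hv x y z).deriv
  simp only [PX, DX, EZ, UC, e1]

lemma PY_app (By : ℝ) {v : F3} (hv : ContDiff ℝ (⊤ : ℕ∞) (UC v)) (x y z : ℝ) :
    PY By v x y z = EZ' (x,y,z) * (-Complex.I * pd (0,1,0) (UC v) (x,y,z))
      + (By : ℂ) * UC v (x,y,z) := by
  have e2 : deriv (fun t => v x t z) y = pd (0,1,0) (UC v) (x,y,z) :=
    (hasDerivAt_slice2 hv x y z).deriv
  simp only [PY, DY, EZ', UC, e2]

lemma DZ_app {v : F3} (hv : ContDiff ℝ (⊤ : ℕ∞) (UC v)) (x y z : ℝ) :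
    DZ v x y z = -Complex.I * pd (0,0,1) (UC v) (x,y,z) := by
  have e3 : deriv (fun t => v x y t) z = pd (0,0,1) (UC v) (x,y,z) :=
    (hasDerivAt_slice3 hv x y z).deriv
  simp only [DZ, UC, e3]

lemma Kxdag_app (B phi : ℝ) {v : F3} (hv : ContDiff ℝ (⊤ : ℕ∞) (UC v)) (x y z : ℝ) :
    Kxdag B phi v x y z
      = EZ (x,y,z) * (-Complex.I * pd (1,0,0) (UC v) (x,y,z))
        + (Real.sin phi : ℂ) * (((B : ℂ) - 1/2) * UC v (x,y,z)
            + Complex.I * (-Complex.I * pd (0,0,1) (UC v) (x,y,z))) := by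
  have e1 : deriv (fun t => v t y z) x = pd (1,0,0) (UC v) (x,y,z) :=
    (hasDerivAt_slice1 hv x y z).deriv
  have e3 : deriv (fun t => v x y t) z = pd (0,0,1) (UC v) (x,y,z) :=
    (hasDerivAt_slice3 hv x y z).deriv
  simp only [Kxdag, DX, DZ, EZ, UC, e1, e3]

lemma Kydag_app (B phi : ℝ) {v : F3} (hv : ContDiff ℝ (⊤ : ℕ∞) (UC v)) (x y z : ℝ) :
    Kydag B phi v x y z
      = EZ' (x,y,z) * (-Complex.I * pd (0,1,0) (UC v) (x,y,z))
        + (Real.cos phi : ℂ) * (((B : ℂ) - 1/2) * UC v (x,y,z)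
            - Complex.I * (-Complex.I * pd (0,0,1) (UC v) (x,y,z))) := by
  have e2 : deriv (fun t => v x t z) y = pd (0,1,0) (UC v) (x,y,z) :=
    (hasDerivAt_slice2 hv x y z).deriv
  have e3 : deriv (fun t => v x y t) z = pd (0,0,1) (UC v) (x,y,z) :=
    (hasDerivAt_slice3 hv x y z).deriv
  simp only [Kydag, DY, DZ, EZ', UC, e2, e3]

lemma UC_Kx (B phi : ℝ) (hg : ContDiff ℝ (⊤ : ℕ∞) (UC u)) :
    UC (Kx B phi u) = VX B phi (UC u) :=
  funext fun p => Kx_eq B phi hg p.1 p.2.1 p.2.2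

lemma UC_Ky (B phi : ℝ) (hg : ContDiff ℝ (⊤ : ℕ∞) (UC u)) :
    UC (Ky B phi u) = VY B phi (UC u) :=
  funext fun p => Ky_eq B phi hg p.1 p.2.1 p.2.2

lemma UC_PX (Bx : ℝ) (hg : ContDiff ℝ (⊤ : ℕ∞) (UC u)) :
    UC (PX Bx u) = WX Bx (UC u) :=
  funext fun p => PX_eq Bx hg p.1 p.2.1 p.2.2

lemma UC_PY (By : ℝ) (hg : ContDiff ℝ (⊤ : ℕ∞) (UC u)) :
    UC (PY By u) = WY By (UC u) :=
  funext fun p => PY_eq By hg p.1 p.2.1 p.2.2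

lemma UC_DZ (hg : ContDiff ℝ (⊤ : ℕ∞) (UC u)) :
    UC (DZ u) = WZ (UC u) :=
  funext fun p => DZ_eq hg p.1 p.2.1 p.2.2

lemma decomposition (Bx By B phi : ℝ) (u : F3) (hg : ContDiff ℝ (⊤ : ℕ∞) (UC u))
    (hx : Bx = B * Real.sin phi) (hy : By = B * Real.cos phi) (x y z : ℝ) :
    2 * Hop Bx By u x y z
      = Kxdag B phi (Kx B phi u) x y z + Kydag B phi (Ky B phi u) x y z
        + ((B : ℂ) - 1/4) * u x y z := by
  have hVX : ContDiff ℝ (⊤ : ℕ∞) (VX B phi (UC u)) := VX_contDiff B phi hg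
  have hVY : ContDiff ℝ (⊤ : ℕ∞) (VY B phi (UC u)) := VY_contDiff B phi hg
  have hWX : ContDiff ℝ (⊤ : ℕ∞) (WX Bx (UC u)) := WX_contDiff Bx hg
  have hWY : ContDiff ℝ (⊤ : ℕ∞) (WY By (UC u)) := WY_contDiff By hg
  have hWZ : ContDiff ℝ (⊤ : ℕ∞) (WZ (UC u)) := WZ_contDiff hg
  have hUKx : ContDiff ℝ (⊤ : ℕ∞) (UC (Kx B phi u)) := (UC_Kx B phi hg) ▸ hVX
  have hUKy : ContDiff ℝ (⊤ : ℕ∞) (UC (Ky B phi u)) := (UC_Ky B phi hg) ▸ hVY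
  have hUPX : ContDiff ℝ (⊤ : ℕ∞) (UC (PX Bx u)) := (UC_PX Bx hg) ▸ hWX
  have hUPY : ContDiff ℝ (⊤ : ℕ∞) (UC (PY By u)) := (UC_PY By hg) ▸ hWY
  have hUDZ : ContDiff ℝ (⊤ : ℕ∞) (UC (DZ u)) := (UC_DZ hg) ▸ hWZ
  rw [show Hop Bx By u x y z = (1/2 : ℂ) * (PX Bx (PX Bx u) x y z + PY By (PY By u) x y z
      + DZ (DZ u) x y z) from rfl,
    PX_app Bx hUPX x y z, PY_app By hUPY x y z, DZ_app hUDZ x y z,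
    Kxdag_app B phi hUKx x y z, Kydag_app B phi hUKy x y z,
    UC_Kx B phi hg, UC_Ky B phi hg, UC_PX Bx hg, UC_PY By hg, UC_DZ hg,
    pd_VX B phi hg, pd_VX B phi hg, pd_VY B phi hg, pd_VY B phi hg,
    pd_WX Bx hg, pd_WY By hg, pd_WZ hg]
  have hcomm13 : pd ((0:ℝ),(0:ℝ),(1:ℝ)) (pd (1,0,0) (UC u)) (x,y,z)
      = pd ((1:ℝ),(0:ℝ),(0:ℝ)) (pd (0,0,1) (UC u)) (x,y,z) := pd_comm hg _ _ _
  have hcomm23 : pd ((0:ℝ),(0:ℝ),(1:ℝ)) (pd (0,1,0) (UC u)) (x,y,z)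
      = pd ((0:ℝ),(1:ℝ),(0:ℝ)) (pd (0,0,1) (UC u)) (x,y,z) := pd_comm hg _ _ _
  have hxC : (Bx : ℂ) = (B : ℂ) * (Real.sin phi : ℂ) := by exact_mod_cast congrArg Complex.ofReal hx
  have hyC : (By : ℂ) = (B : ℂ) * (Real.cos phi : ℂ) := by exact_mod_cast congrArg Complex.ofReal hy
  have hscC : (Real.sin phi : ℂ)^2 + (Real.cos phi : ℂ)^2 = 1 := by
    exact_mod_cast congrArg Complex.ofReal (Real.sin_sq_add_cos_sq phi)
  have huc : u x y z = UC u (x,y,z) := rfl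
  simp only [VX_def, VY_def, WX_def, WY_def, WZ_def, EZ, EZ', huc, hcomm13, hcomm23, hxC, hyC,
    Complex.ofReal_zero, Complex.ofReal_one]
  linear_combination
    ((((B:ℂ) - 1/4) * (UC u (x,y,z))
      + (Complex.I ^ 4) * pd ((0:ℝ),(0:ℝ),(1:ℝ)) (pd ((0:ℝ),(0:ℝ),(1:ℝ)) (UC u)) (x,y,z))) * hscC
    + (-( (Real.exp z : ℂ) * (Real.sin phi : ℂ) * pd ((1:ℝ),(0:ℝ),(0:ℝ)) (UC u) (x,y,z) * Complex.I)
       - (Real.exp (-z) : ℂ) * (Real.cos phi : ℂ) * pd ((0:ℝ),(1:ℝ),(0:ℝ)) (UC u) (x,y,z) * Complex.I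
       + (Complex.I ^ 2) * pd ((0:ℝ),(0:ℝ),(1:ℝ)) (pd ((0:ℝ),(0:ℝ),(1:ℝ)) (UC u)) (x,y,z)) * Complex.I_sq

lemma conjVX_eq (B phi : ℝ) {g : ℝ × ℝ × ℝ → ℂ} (p : ℝ × ℝ × ℝ) :
    (starRingEnd ℂ) (VX B phi g p)
      = EZ p * (Complex.I * (starRingEnd ℂ) (pd (1,0,0) g p))
        + (Real.sin phi : ℂ) * (((B : ℂ) - 1/2) * (starRingEnd ℂ) (g p)
            - (starRingEnd ℂ) (pd (0,0,1) g p)) := by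
  simp only [VX_def, EZ, map_add, map_mul, map_sub, map_neg, Complex.conj_ofReal,
    Complex.conj_I, map_div₀, map_one, map_ofNat]
  linear_combination ((Real.sin phi : ℂ) * (starRingEnd ℂ) (pd ((0:ℝ),(0:ℝ),(1:ℝ)) g p)) * Complex.I_sq

lemma conjVY_eq (B phi : ℝ) {g : ℝ × ℝ × ℝ → ℂ} (p : ℝ × ℝ × ℝ) :
    (starRingEnd ℂ) (VY B phi g p)
      = EZ' p * (Complex.I * (starRingEnd ℂ) (pd (0,1,0) g p))
        + (Real.cos phi : ℂ) * (((B : ℂ) - 1/2) * (starRingEnd ℂ) (g p)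
            + (starRingEnd ℂ) (pd (0,0,1) g p)) := by
  simp only [VY_def, EZ', map_add, map_mul, map_neg, Complex.conj_ofReal, Complex.conj_I,
    map_sub, map_div₀, map_one, map_ofNat]
  linear_combination (-((Real.cos phi : ℂ) * (starRingEnd ℂ) (pd ((0:ℝ),(0:ℝ),(1:ℝ)) g p))) * Complex.I_sq

lemma Q1 (B phi : ℝ) (hg : ContDiff ℝ (⊤ : ℕ∞) (UC u)) (x y z : ℝ) :
    Kxdag B phi (Kx B phi u) x y z * (starRingEnd ℂ) (u x y z)
      = VX B phi (UC u) (x,y,z) * (starRingEnd ℂ) (VX B phi (UC u) (x,y,z))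
        + (-Complex.I) * pd (1,0,0)
            (fun q => EZ q * (VX B phi (UC u) q * (starRingEnd ℂ) (UC u q))) (x,y,z)
        + (Real.sin phi : ℂ) * pd (0,0,1)
            (fun q => VX B phi (UC u) q * (starRingEnd ℂ) (UC u q)) (x,y,z) := by
  have hVX := VX_contDiff B phi hg
  have hUKx : ContDiff ℝ (⊤ : ℕ∞) (UC (Kx B phi u)) := (UC_Kx B phi hg) ▸ hVX
  have dVX := cd_diff hVX
  have dcg : Differentiable ℝ (fun q => (starRingEnd ℂ) (UC u q)) := cd_diff (contDiff_conj hg)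
  have dEZ := cd_diff contDiff_EZ
  have huc : u x y z = UC u (x,y,z) := rfl
  rw [Kxdag_app B phi hUKx x y z, UC_Kx B phi hg,
    pd_mul dEZ (dVX.fun_mul dcg), pd_mul dVX dcg, pd_mul dVX dcg,
    pd_conj (cd_diff hg), pd_conj (cd_diff hg), pd_EZ, huc, conjVX_eq B phi (x,y,z)]
  simp only [EZ, Complex.ofReal_zero, Complex.ofReal_one]
  linear_combination (-((Real.sin phi : ℂ) * pd ((0:ℝ),(0:ℝ),(1:ℝ)) (VX B phi (UC u)) (x,y,z)
    * (starRingEnd ℂ) (UC u (x,y,z)))) * Complex.I_sq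

lemma Q2 (B phi : ℝ) (hg : ContDiff ℝ (⊤ : ℕ∞) (UC u)) (x y z : ℝ) :
    Kydag B phi (Ky B phi u) x y z * (starRingEnd ℂ) (u x y z)
      = VY B phi (UC u) (x,y,z) * (starRingEnd ℂ) (VY B phi (UC u) (x,y,z))
        + (-Complex.I) * pd (0,1,0)
            (fun q => EZ' q * (VY B phi (UC u) q * (starRingEnd ℂ) (UC u q))) (x,y,z)
        + (-(Real.cos phi : ℂ)) * pd (0,0,1)
            (fun q => VY B phi (UC u) q * (starRingEnd ℂ) (UC u q)) (x,y,z) := by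
  have hVY := VY_contDiff B phi hg
  have hUKy : ContDiff ℝ (⊤ : ℕ∞) (UC (Ky B phi u)) := (UC_Ky B phi hg) ▸ hVY
  have dVY := cd_diff hVY
  have dcg : Differentiable ℝ (fun q => (starRingEnd ℂ) (UC u q)) := cd_diff (contDiff_conj hg)
  have dEZ' := cd_diff contDiff_EZ'
  have huc : u x y z = UC u (x,y,z) := rfl
  rw [Kydag_app B phi hUKy x y z, UC_Ky B phi hg,
    pd_mul dEZ' (dVY.fun_mul dcg), pd_mul dVY dcg, pd_mul dVY dcg,
    pd_conj (cd_diff hg), pd_conj (cd_diff hg), pd_EZ', huc, conjVY_eq B phi (x,y,z)]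
  simp only [EZ', Complex.ofReal_zero, Complex.ofReal_one]
  linear_combination ((Real.cos phi : ℂ) * pd ((0:ℝ),(0:ℝ),(1:ℝ)) (VY B phi (UC u)) (x,y,z)
    * (starRingEnd ℂ) (UC u (x,y,z))) * Complex.I_sq

/-- If `B = √(B_x² + B_y²) > 1/2` and `B_x = B sin φ`,
`B_y = B cos φ`, then on `C_0^∞(ℝ³)` the operator `2H` decomposes as
`2H = K_x† K_x + K_y† K_y + B − 1/4`; consequently
`⟨H u, u⟩ ≥ (1/2)(B − 1/4) ‖u‖²` for all `u ∈ C_0^∞(ℝ³)`. -/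
theorem sol_decomposition_large_field (Bx By phi : ℝ) (u : F3)
    (hu : ContDiff ℝ (⊤ : ℕ∞) (fun p : ℝ × ℝ × ℝ => u p.1 p.2.1 p.2.2))
    (hc : HasCompactSupport (fun p : ℝ × ℝ × ℝ => u p.1 p.2.1 p.2.2))
    (hB : 1/2 < Real.sqrt (Bx^2 + By^2))
    (hx : Bx = Real.sqrt (Bx^2 + By^2) * Real.sin phi)
    (hy : By = Real.sqrt (Bx^2 + By^2) * Real.cos phi) :
    (∀ x y z : ℝ, 2 * Hop Bx By u x y z
        = Kxdag (Real.sqrt (Bx^2 + By^2)) phi (Kx (Real.sqrt (Bx^2 + By^2)) phi u) x y z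
          + Kydag (Real.sqrt (Bx^2 + By^2)) phi (Ky (Real.sqrt (Bx^2 + By^2)) phi u) x y z
          + ((Real.sqrt (Bx^2 + By^2) : ℂ) - 1/4) * u x y z) ∧
    (1/2) * (Real.sqrt (Bx^2 + By^2) - 1/4)
        * (∫ p : ℝ × ℝ × ℝ, ‖u p.1 p.2.1 p.2.2‖^2)
      ≤ (∫ p : ℝ × ℝ × ℝ,
          Hop Bx By u p.1 p.2.1 p.2.2 * (starRingEnd ℂ) (u p.1 p.2.1 p.2.2)).re := by
  have hg : ContDiff ℝ (⊤ : ℕ∞) (UC u) := hu.of_le (by simp)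
  have hgc : HasCompactSupport (UC u) := hc
  set B := Real.sqrt (Bx^2 + By^2) with hBdef
  have hdec := decomposition Bx By B phi u hg hx hy
  refine ⟨hdec, ?_⟩
  -- notation
  have hVX := VX_contDiff B phi hg
  have hVY := VY_contDiff B phi hg
  have hcVX : HasCompactSupport (VX B phi (UC u)) := VX_hcs B phi hgc
  have hcVY : HasCompactSupport (VY B phi (UC u)) := VY_hcs B phi hgc
  have hccg : Continuous fun q : ℝ × ℝ × ℝ => (starRingEnd ℂ) (UC u q) :=
    Complex.conjCLE.continuous.comp hg.continuous
  have hwX : ContDiff ℝ (⊤ : ℕ∞) (fun q => VX B phi (UC u) q * (starRingEnd ℂ) (UC u q)) :=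
    hVX.mul (contDiff_conj hg)
  have hwX1 : ContDiff ℝ (⊤ : ℕ∞)
      (fun q => EZ q * (VX B phi (UC u) q * (starRingEnd ℂ) (UC u q))) :=
    contDiff_EZ.mul hwX
  have hwY : ContDiff ℝ (⊤ : ℕ∞) (fun q => VY B phi (UC u) q * (starRingEnd ℂ) (UC u q)) :=
    hVY.mul (contDiff_conj hg)
  have hwY2 : ContDiff ℝ (⊤ : ℕ∞)
      (fun q => EZ' q * (VY B phi (UC u) q * (starRingEnd ℂ) (UC u q))) :=
    contDiff_EZ'.mul hwY
  have hcwX : HasCompactSupport (fun q => VX B phi (UC u) q * (starRingEnd ℂ) (UC u q)) :=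
    HasCompactSupport.intro hgc fun p hp => by
      simp [image_eq_zero_of_notMem_tsupport hp]
  have hcwX1 : HasCompactSupport
      (fun q => EZ q * (VX B phi (UC u) q * (starRingEnd ℂ) (UC u q))) :=
    HasCompactSupport.intro hgc fun p hp => by
      simp [image_eq_zero_of_notMem_tsupport hp]
  have hcwY : HasCompactSupport (fun q => VY B phi (UC u) q * (starRingEnd ℂ) (UC u q)) :=
    HasCompactSupport.intro hgc fun p hp => by
      simp [image_eq_zero_of_notMem_tsupport hp]
  have hcwY2 : HasCompactSupport
      (fun q => EZ' q * (VY B phi (UC u) q * (starRingEnd ℂ) (UC u q))) :=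
    HasCompactSupport.intro hgc fun p hp => by
      simp [image_eq_zero_of_notMem_tsupport hp]
  -- pointwise identity
  have key : (fun p : ℝ × ℝ × ℝ =>
        Hop Bx By u p.1 p.2.1 p.2.2 * (starRingEnd ℂ) (u p.1 p.2.1 p.2.2))
      = fun p => (1/2 : ℂ) *
        (VX B phi (UC u) p * (starRingEnd ℂ) (VX B phi (UC u) p)
          + VY B phi (UC u) p * (starRingEnd ℂ) (VY B phi (UC u) p)
          + ((B : ℂ) - 1/4) * (UC u p * (starRingEnd ℂ) (UC u p))
          + ((-Complex.I) * pd (1,0,0)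
              (fun q => EZ q * (VX B phi (UC u) q * (starRingEnd ℂ) (UC u q))) p
            + (Real.sin phi : ℂ) * pd (0,0,1)
              (fun q => VX B phi (UC u) q * (starRingEnd ℂ) (UC u q)) p
            + (-Complex.I) * pd (0,1,0)
              (fun q => EZ' q * (VY B phi (UC u) q * (starRingEnd ℂ) (UC u q))) p
            + (-(Real.cos phi : ℂ)) * pd (0,0,1)
              (fun q => VY B phi (UC u) q * (starRingEnd ℂ) (UC u q)) p)) := by
    funext p
    have h2 := hdec p.1 p.2.1 p.2.2
    have q1 := Q1 B phi hg p.1 p.2.1 p.2.2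
    have q2 := Q2 B phi hg p.1 p.2.1 p.2.2
    have hp : ((p.1, p.2.1, p.2.2) : ℝ × ℝ × ℝ) = p := rfl
    rw [hp] at q1 q2
    have huc : u p.1 p.2.1 p.2.2 = UC u p := rfl
    calc Hop Bx By u p.1 p.2.1 p.2.2 * (starRingEnd ℂ) (u p.1 p.2.1 p.2.2)
        = (1/2 : ℂ) * ((2 * Hop Bx By u p.1 p.2.1 p.2.2)
            * (starRingEnd ℂ) (u p.1 p.2.1 p.2.2)) := by ring
      _ = (1/2 : ℂ) * ((Kxdag B phi (Kx B phi u) p.1 p.2.1 p.2.2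
            + Kydag B phi (Ky B phi u) p.1 p.2.1 p.2.2
            + ((B : ℂ) - 1/4) * u p.1 p.2.1 p.2.2)
            * (starRingEnd ℂ) (u p.1 p.2.1 p.2.2)) := by rw [h2]
      _ = (1/2 : ℂ) * (Kxdag B phi (Kx B phi u) p.1 p.2.1 p.2.2
              * (starRingEnd ℂ) (u p.1 p.2.1 p.2.2)
            + Kydag B phi (Ky B phi u) p.1 p.2.1 p.2.2
              * (starRingEnd ℂ) (u p.1 p.2.1 p.2.2)
            + ((B : ℂ) - 1/4) * (u p.1 p.2.1 p.2.2
              * (starRingEnd ℂ) (u p.1 p.2.1 p.2.2))) := by ring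
      _ = _ := by rw [q1, q2, huc]; ring
  rw [key]
  -- integrability
  have iF1 : Integrable (fun p : ℝ × ℝ × ℝ =>
      VX B phi (UC u) p * (starRingEnd ℂ) (VX B phi (UC u) p)) :=
    (hVX.continuous.mul (Complex.conjCLE.continuous.comp hVX.continuous)).integrable_of_hasCompactSupport
      (hcVX.mul_right)
  have iF4 : Integrable (fun p : ℝ × ℝ × ℝ =>
      VY B phi (UC u) p * (starRingEnd ℂ) (VY B phi (UC u) p)) :=
    (hVY.continuous.mul (Complex.conjCLE.continuous.comp hVY.continuous)).integrable_of_hasCompactSupport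
      (hcVY.mul_right)
  have iF7 : Integrable (fun p : ℝ × ℝ × ℝ =>
      ((B : ℂ) - 1/4) * (UC u p * (starRingEnd ℂ) (UC u p))) :=
    (continuous_const.mul (hg.continuous.mul hccg)).integrable_of_hasCompactSupport
      (HasCompactSupport.intro hgc fun p hp => by
        simp [image_eq_zero_of_notMem_tsupport hp])
  have iF2 : Integrable (fun p : ℝ × ℝ × ℝ => (-Complex.I) * pd (1,0,0)
      (fun q => EZ q * (VX B phi (UC u) q * (starRingEnd ℂ) (UC u q))) p) :=
    (integrable_pd hwX1 hcwX1 _).const_mul _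
  have iF3 : Integrable (fun p : ℝ × ℝ × ℝ => (Real.sin phi : ℂ) * pd (0,0,1)
      (fun q => VX B phi (UC u) q * (starRingEnd ℂ) (UC u q)) p) :=
    (integrable_pd hwX hcwX _).const_mul _
  have iF5 : Integrable (fun p : ℝ × ℝ × ℝ => (-Complex.I) * pd (0,1,0)
      (fun q => EZ' q * (VY B phi (UC u) q * (starRingEnd ℂ) (UC u q))) p) :=
    (integrable_pd hwY2 hcwY2 _).const_mul _
  have iF6 : Integrable (fun p : ℝ × ℝ × ℝ => (-(Real.cos phi : ℂ)) * pd (0,0,1)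
      (fun q => VY B phi (UC u) q * (starRingEnd ℂ) (UC u q)) p) :=
    (integrable_pd hwY hcwY _).const_mul _
  have iG12 : Integrable (fun p : ℝ × ℝ × ℝ => VX B phi (UC u) p * (starRingEnd ℂ) (VX B phi (UC u) p) + VY B phi (UC u) p * (starRingEnd ℂ) (VY B phi (UC u) p)) := iF1.add iF4
  have iG127 : Integrable (fun p : ℝ × ℝ × ℝ => VX B phi (UC u) p * (starRingEnd ℂ) (VX B phi (UC u) p) + VY B phi (UC u) p * (starRingEnd ℂ) (VY B phi (UC u) p) + ((B : ℂ) - 1/4) * (UC u p * (starRingEnd ℂ) (UC u p))) := iG12.add iF7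
  have iG23 : Integrable (fun p : ℝ × ℝ × ℝ => (-Complex.I) * pd (1,0,0) (fun q => EZ q * (VX B phi (UC u) q * (starRingEnd ℂ) (UC u q))) p + (Real.sin phi : ℂ) * pd (0,0,1) (fun q => VX B phi (UC u) q * (starRingEnd ℂ) (UC u q)) p) := iF2.add iF3
  have iG235 : Integrable (fun p : ℝ × ℝ × ℝ => (-Complex.I) * pd (1,0,0) (fun q => EZ q * (VX B phi (UC u) q * (starRingEnd ℂ) (UC u q))) p + (Real.sin phi : ℂ) * pd (0,0,1) (fun q => VX B phi (UC u) q * (starRingEnd ℂ) (UC u q)) p + (-Complex.I) * pd (0,1,0) (fun q => EZ' q * (VY B phi (UC u) q * (starRingEnd ℂ) (UC u q))) p) := iG23.add iF5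
  have iG2356 : Integrable (fun p : ℝ × ℝ × ℝ => (-Complex.I) * pd (1,0,0) (fun q => EZ q * (VX B phi (UC u) q * (starRingEnd ℂ) (UC u q))) p + (Real.sin phi : ℂ) * pd (0,0,1) (fun q => VX B phi (UC u) q * (starRingEnd ℂ) (UC u q)) p + (-Complex.I) * pd (0,1,0) (fun q => EZ' q * (VY B phi (UC u) q * (starRingEnd ℂ) (UC u q))) p + (-(Real.cos phi : ℂ)) * pd (0,0,1) (fun q => VY B phi (UC u) q * (starRingEnd ℂ) (UC u q)) p) := iG235.add iF6
  rw [integral_const_mul]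
  simp only [integral_add iG127 iG2356, integral_add iG12 iF7, integral_add iF1 iF4,
    integral_add iG235 iF6, integral_add iG23 iF5, integral_add iF2 iF3]
  have z1 : (∫ p : ℝ × ℝ × ℝ, (-Complex.I) * pd (1,0,0)
      (fun q => EZ q * (VX B phi (UC u) q * (starRingEnd ℂ) (UC u q))) p) = 0 := by
    rw [integral_const_mul, integral_pd1 hwX1 hcwX1, mul_zero]
  have z2 : (∫ p : ℝ × ℝ × ℝ, (Real.sin phi : ℂ) * pd (0,0,1)
      (fun q => VX B phi (UC u) q * (starRingEnd ℂ) (UC u q)) p) = 0 := by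
    rw [integral_const_mul, integral_pd3 hwX hcwX, mul_zero]
  have z3 : (∫ p : ℝ × ℝ × ℝ, (-Complex.I) * pd (0,1,0)
      (fun q => EZ' q * (VY B phi (UC u) q * (starRingEnd ℂ) (UC u q))) p) = 0 := by
    rw [integral_const_mul, integral_pd2 hwY2 hcwY2, mul_zero]
  have z4 : (∫ p : ℝ × ℝ × ℝ, (-(Real.cos phi : ℂ)) * pd (0,0,1)
      (fun q => VY B phi (UC u) q * (starRingEnd ℂ) (UC u q)) p) = 0 := by
    rw [integral_const_mul, integral_pd3 hwY hcwY, mul_zero]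
  rw [z1, z2, z3, z4]
  have mcj : ∀ w : ℂ, w * (starRingEnd ℂ) w = ((‖w‖^2 : ℝ) : ℂ) := by
    intro w
    rw [Complex.mul_conj]
    norm_cast
    rw [Complex.normSq_eq_norm_sq]
  have e1 : (∫ p : ℝ × ℝ × ℝ, VX B phi (UC u) p * (starRingEnd ℂ) (VX B phi (UC u) p))
      = ((∫ p : ℝ × ℝ × ℝ, ‖VX B phi (UC u) p‖^2 : ℝ) : ℂ) := by
    rw [show (fun p : ℝ × ℝ × ℝ => VX B phi (UC u) p * (starRingEnd ℂ) (VX B phi (UC u) p))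
      = fun p : ℝ × ℝ × ℝ => ((‖VX B phi (UC u) p‖^2 : ℝ) : ℂ) from funext fun p => mcj _]
    exact integral_ofReal
  have e4 : (∫ p : ℝ × ℝ × ℝ, VY B phi (UC u) p * (starRingEnd ℂ) (VY B phi (UC u) p))
      = ((∫ p : ℝ × ℝ × ℝ, ‖VY B phi (UC u) p‖^2 : ℝ) : ℂ) := by
    rw [show (fun p : ℝ × ℝ × ℝ => VY B phi (UC u) p * (starRingEnd ℂ) (VY B phi (UC u) p))
      = fun p : ℝ × ℝ × ℝ => ((‖VY B phi (UC u) p‖^2 : ℝ) : ℂ) from funext fun p => mcj _]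
    exact integral_ofReal
  have e7 : (∫ p : ℝ × ℝ × ℝ, ((B : ℂ) - 1/4) * (UC u p * (starRingEnd ℂ) (UC u p)))
      = ((B - 1/4 : ℝ) : ℂ) * ((∫ p : ℝ × ℝ × ℝ, ‖u p.1 p.2.1 p.2.2‖^2 : ℝ) : ℂ) := by
    rw [integral_const_mul,
      show (fun p : ℝ × ℝ × ℝ => UC u p * (starRingEnd ℂ) (UC u p))
        = fun p : ℝ × ℝ × ℝ => ((‖u p.1 p.2.1 p.2.2‖^2 : ℝ) : ℂ) from funext fun p => mcj _,
      show ((B : ℂ) - 1/4) = ((B - 1/4 : ℝ) : ℂ) from by push_cast; ring]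
    exact congrArg (fun t => ((B - 1/4 : ℝ) : ℂ) * t) integral_ofReal
  rw [e1, e4, e7]
  have hrA0 : (0:ℝ) ≤ ∫ p : ℝ × ℝ × ℝ, ‖VX B phi (UC u) p‖^2 :=
    integral_nonneg fun p => sq_nonneg _
  have hrB0 : (0:ℝ) ≤ ∫ p : ℝ × ℝ × ℝ, ‖VY B phi (UC u) p‖^2 :=
    integral_nonneg fun p => sq_nonneg _
  have hJ0 : (0:ℝ) ≤ ∫ p : ℝ × ℝ × ℝ, ‖u p.1 p.2.1 p.2.2‖^2 :=
    integral_nonneg fun p => sq_nonneg _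
  generalize hrA : (∫ p : ℝ × ℝ × ℝ, ‖VX B phi (UC u) p‖^2) = rA at hrA0 ⊢
  generalize hrB : (∫ p : ℝ × ℝ × ℝ, ‖VY B phi (UC u) p‖^2) = rB at hrB0 ⊢
  generalize hJ : (∫ p : ℝ × ℝ × ℝ, ‖u p.1 p.2.1 p.2.2‖^2) = J at hJ0 ⊢
  have hre : ((1/2 : ℂ) * ((↑rA + ↑rB + ((B - 1/4 : ℝ) : ℂ) * ↑J) + (0 + 0 + 0 + 0))).re
      = (1/2) * (rA + rB + (B - 1/4) * J) := by
    norm_num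
  rw [hre]
  nlinarith [hrA0, hrB0]
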